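/- Under the discretized (Galerkin) piezoelectric setting: let t₀ ≥ 0, let f : ℝ → ℝⁿ be continuous and g : ℝ → ℝᵏ be continuously differentiable with f(t) = 0 and g(t) = 0 for all t ≥ t₀, and let (u, φ) solve the discretized piezoelectric system on [0, ∞) with u twice continuously differentiable and φ continuously differentiable. Then the energy function η̃(t) := ⟨M u'(t), u'(t)⟩ + ⟨K u(t), u(t)⟩ + ⟨A φ(t), φ(t)⟩ is monotonically nonincreasing on [t₀, ∞). -/

import Mathlib

open MeasureTheory Matrix Set Filter

/-- The pair `(u, φ)` (with first and second derivatives `u'`, `u''` of `u`) solves the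
discretized (Galerkin) piezoelectric system with mass matrix `M`, stiffness matrix `K`,
dielectric matrix `A`, piezoelectric coupling matrix `C`, Rayleigh damping parameters
`α, β` and forcing terms `f, g` on the time set `I`. -/
def PiezoSolves {n k : ℕ} (M K : Matrix (Fin n) (Fin n) ℝ)
    (A : Matrix (Fin k) (Fin k) ℝ) (C : Matrix (Fin n) (Fin k) ℝ)
    (α β : ℝ) (f : ℝ → Fin n → ℝ) (g : ℝ → Fin k → ℝ)
    (u u' u'' : ℝ → Fin n → ℝ) (φ : ℝ → Fin k → ℝ) (I : Set ℝ) : Prop :=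
  (∀ t ∈ I, HasDerivAt u (u' t) t) ∧
  (∀ t ∈ I, HasDerivAt u' (u'' t) t) ∧
  (∀ t ∈ I,
    M.mulVec (u'' t) + α • M.mulVec (u' t) + K.mulVec (u t)
      + β • K.mulVec (u' t) + C.mulVec (φ t) = f t) ∧
  (∀ t ∈ I, Cᵀ.mulVec (u t) - A.mulVec (φ t) = g t)

/-!
Once the forcing vanishes, the constraint `A φ = Cᵀ u` can be solved for `φ = A⁻¹ Cᵀ u`.
Substituting it turns the system into the damped oscillator
`M u'' + (α M + β K) u' + (K + C A⁻¹ Cᵀ) u = 0` with a symmetric stiffness, and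
`⟨A φ, φ⟩ = ⟨C A⁻¹ Cᵀ u, u⟩` turns `η̃` into its energy `⟨M u', u'⟩ + ⟨(K + C A⁻¹ Cᵀ) u, u⟩`,
whose derivative is `-2 ⟨(α M + β K) u', u'⟩ ≤ 0`.
-/

section DampedOscillator

variable {ι κ : Type*} [Fintype ι] [Fintype κ]

theorem Matrix.IsHermitian.mulVec_dotProduct_comm {S : Matrix ι ι ℝ} (hS : S.IsHermitian)
    (x y : ι → ℝ) : S *ᵥ x ⬝ᵥ y = S *ᵥ y ⬝ᵥ x := by
  rw [dotProduct_comm, dotProduct_mulVec, ← mulVec_transpose,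
    ← conjTranspose_eq_transpose_of_trivial, hS.eq]

theorem Matrix.transpose_mulVec_dotProduct (B : Matrix ι κ ℝ) (x : ι → ℝ) (y : κ → ℝ) :
    Bᵀ *ᵥ x ⬝ᵥ y = B *ᵥ y ⬝ᵥ x := by
  rw [mulVec_transpose, ← dotProduct_mulVec, dotProduct_comm]

theorem HasDerivAt.mulVec_dotProduct (B : Matrix ι κ ℝ) {v : ℝ → κ → ℝ} {w : ℝ → ι → ℝ}
    {v' : κ → ℝ} {w' : ι → ℝ} {t : ℝ} (hv : HasDerivAt v v' t) (hw : HasDerivAt w w' t) :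
    HasDerivAt (fun s => B *ᵥ v s ⬝ᵥ w s) (B *ᵥ v' ⬝ᵥ w t + B *ᵥ v t ⬝ᵥ w') t := by
  have hv' := hasDerivAt_pi.1 hv
  have hw' := hasDerivAt_pi.1 hw
  simp only [mulVec, dotProduct, ← Finset.sum_add_distrib]
  exact HasDerivAt.fun_sum fun i _ =>
    (HasDerivAt.fun_sum fun j _ => (hv' j).const_mul (B i j)).mul (hw' i)

theorem HasDerivAt.mulVec_dotProduct_self {S : Matrix ι ι ℝ} (hS : S.IsHermitian)
    {v : ℝ → ι → ℝ} {v' : ι → ℝ} {t : ℝ} (hv : HasDerivAt v v' t) :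
    HasDerivAt (fun s => S *ᵥ v s ⬝ᵥ v s) (2 * (S *ᵥ v' ⬝ᵥ v t)) t := by
  convert hv.mulVec_dotProduct S hv using 1
  rw [hS.mulVec_dotProduct_comm (v t)]
  ring

theorem antitoneOn_damped_oscillator_energy {M D S : Matrix ι ι ℝ} (hM : M.IsHermitian)
    (hD : D.PosSemidef) (hS : S.IsHermitian) {u u' u'' : ℝ → ι → ℝ} {s : Set ℝ}
    (hs : Convex ℝ s) (hu : ∀ t ∈ s, HasDerivAt u (u' t) t)
    (hu' : ∀ t ∈ s, HasDerivAt u' (u'' t) t)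
    (heq : ∀ t ∈ s, M *ᵥ u'' t + D *ᵥ u' t + S *ᵥ u t = 0) :
    AntitoneOn (fun t => M *ᵥ u' t ⬝ᵥ u' t + S *ᵥ u t ⬝ᵥ u t) s := by
  have hderiv : ∀ t ∈ s, HasDerivAt (fun t => M *ᵥ u' t ⬝ᵥ u' t + S *ᵥ u t ⬝ᵥ u t)
      (-2 * (D *ᵥ u' t ⬝ᵥ u' t)) t := by
    intro t ht
    refine (((hu' t ht).mulVec_dotProduct_self hM).fun_add
      ((hu t ht).mulVec_dotProduct_self hS)).congr_deriv ?_
    have hdot := congrArg (· ⬝ᵥ u' t) (heq t ht)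
    simp only [add_dotProduct, zero_dotProduct] at hdot
    linarith [hS.mulVec_dotProduct_comm (u' t) (u t)]
  refine antitoneOn_of_hasDerivWithinAt_nonpos hs
    (fun t ht => (hderiv t ht).continuousAt.continuousWithinAt)
    (fun t ht => (hderiv t (interior_subset ht)).hasDerivWithinAt) fun t _ => ?_
  have hD_nonneg : 0 ≤ D *ᵥ u' t ⬝ᵥ u' t := by
    simpa [dotProduct_comm] using hD.dotProduct_mulVec_nonneg (u' t)
  linarith

end DampedOscillator

theorem piezo_discrete_energy_antitone_general {n k : ℕ}
    (M K : Matrix (Fin n) (Fin n) ℝ) (A : Matrix (Fin k) (Fin k) ℝ)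
    (C : Matrix (Fin n) (Fin k) ℝ) (α β : ℝ)
    (hM : M.PosDef) (hK : K.PosSemidef) (hA : A.PosDef)
    (hα : 0 ≤ α) (hβ : 0 ≤ β)
    (t₀ : ℝ) (ht₀ : 0 ≤ t₀)
    (f : ℝ → Fin n → ℝ)
    (g : ℝ → Fin k → ℝ)
    (hf0 : ∀ t ≥ t₀, f t = 0) (hg0 : ∀ t ≥ t₀, g t = 0)
    (u u' u'' : ℝ → Fin n → ℝ) (φ : ℝ → Fin k → ℝ)
    (hsol : PiezoSolves M K A C α β f g u u' u'' φ (Ici 0)) :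
    AntitoneOn
      (fun t => M.mulVec (u' t) ⬝ᵥ u' t + K.mulVec (u t) ⬝ᵥ u t + A.mulVec (φ t) ⬝ᵥ φ t)
      (Ici t₀) := by
  obtain ⟨hu, hu', hmotion, hconstraint⟩ := hsol
  have hsub : Ici t₀ ⊆ Ici (0 : ℝ) := Ici_subset_Ici.2 ht₀
  have hAφ : ∀ t ∈ Ici t₀, A *ᵥ φ t = Cᵀ *ᵥ u t := fun t ht =>
    (sub_eq_zero.1 ((hconstraint t (hsub ht)).trans (hg0 t ht))).symm
  have : Invertible A := hA.isUnit.invertible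
  have hφ : ∀ t ∈ Ici t₀, φ t = (A⁻¹ * Cᵀ) *ᵥ u t := fun t ht => by
    rw [← mulVec_mulVec, inv_mulVec_eq_vec (hAφ t ht).symm]
  have hS : (K + C * A⁻¹ * Cᵀ).IsHermitian := by
    simpa [conjTranspose_eq_transpose_of_trivial] using
      hK.1.add (isHermitian_mul_mul_conjTranspose C hA.1.inv)
  refine (antitoneOn_damped_oscillator_energy hM.1 ((hM.posSemidef.smul hα).add (hK.smul hβ))
    hS (convex_Ici t₀) (fun t ht => hu t (hsub ht)) (fun t ht => hu' t (hsub ht))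
    fun t ht => ?_).congr fun t ht => ?_
  · rw [← hf0 t ht, ← hmotion t (hsub ht), hφ t ht]
    simp only [add_mulVec, smul_mulVec, mulVec_mulVec, Matrix.mul_assoc]
    abel
  · dsimp only
    rw [add_mulVec, add_dotProduct, add_assoc, hAφ t ht, transpose_mulVec_dotProduct, hφ t ht,
      mulVec_mulVec, Matrix.mul_assoc]

/-- Long-term behavior: once the excitation vanishes (for `t ≥ t₀`), the energy
`η̃(t) = ⟨M u'(t), u'(t)⟩ + ⟨K u(t), u(t)⟩ + ⟨A φ(t), φ(t)⟩` is monotonically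
nonincreasing on `[t₀, ∞)`. -/
theorem piezo_discrete_energy_antitone {n k : ℕ}
    (M K : Matrix (Fin n) (Fin n) ℝ) (A : Matrix (Fin k) (Fin k) ℝ)
    (C : Matrix (Fin n) (Fin k) ℝ) (α β : ℝ)
    (hM : M.PosDef) (hK : K.PosSemidef) (hA : A.PosDef)
    (hα : 0 ≤ α) (hβ : 0 ≤ β)
    (t₀ : ℝ) (ht₀ : 0 ≤ t₀)
    (f : ℝ → Fin n → ℝ) (hf : Continuous f)
    (g g' : ℝ → Fin k → ℝ) (hg : ∀ t, HasDerivAt g (g' t) t) (hg' : Continuous g')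
    (hf0 : ∀ t ≥ t₀, f t = 0) (hg0 : ∀ t ≥ t₀, g t = 0)
    (u u' u'' : ℝ → Fin n → ℝ) (φ φ' : ℝ → Fin k → ℝ)
    (hsol : PiezoSolves M K A C α β f g u u' u'' φ (Ici 0))
    (hu'' : ContinuousOn u'' (Ici 0))
    (hφ : ∀ t ∈ Ici (0 : ℝ), HasDerivAt φ (φ' t) t)
    (hφ' : ContinuousOn φ' (Ici 0)) :
    AntitoneOn
      (fun t => M.mulVec (u' t) ⬝ᵥ u' t + K.mulVec (u t) ⬝ᵥ u t + A.mulVec (φ t) ⬝ᵥ φ t)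
      (Ici t₀) :=
  piezo_discrete_energy_antitone_general M K A C α β hM hK hA hα hβ t₀ ht₀ f g hf0 hg0 u u' u'' φ
    hsol
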